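/- arXiv:1010.5952 — 6 statements merged into one kernel-verified Lean document; each statement's English description precedes it below -/
import Mathlib

section
/- Let R be an integral domain with field of fractions K. Then R is a D-ring if and only if: for all polynomials f(x), g(x) in R[x] such that for every k in R with g(k) ≠ 0 one has g(k) divides f(k) in R, it follows that f(x) = 0 or deg g ≤ deg f. -/
open Polynomial

/-- An integral domain `R` is a *D-ring* if for all polynomials `f, g ∈ R[x]` such that
`g(k) ∣ f(k)` in `R` for all but finitely many `k ∈ R`, there is a polynomial `q` over the
field of fractions of `R` with `f = q * g` in `K[x]`. -/
def IsDRing (R : Type*) [CommRing R] [IsDomain R] : Prop :=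
  ∀ f g : Polynomial R,
    (∀ᶠ k in Filter.cofinite, g.eval k ∣ f.eval k) →
    ∃ q : Polynomial (FractionRing R),
      f.map (algebraMap R (FractionRing R)) = q * g.map (algebraMap R (FractionRing R))

theorem isDRing_iff_degree (R : Type*) [CommRing R] [IsDomain R] :
    IsDRing R ↔
      ∀ f g : Polynomial R,
        (∀ k : R, g.eval k ≠ 0 → g.eval k ∣ f.eval k) →
        f = 0 ∨ g.degree ≤ f.degree := by
  have hinj : Function.Injective (algebraMap R (FractionRing R)) :=
    IsFractionRing.injective R (FractionRing R)
  constructor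
  · intro hD f g hfg
    rcases eq_or_ne g 0 with rfl | hg
    · right
      simp only [degree_zero]
      exact bot_le
    · have hev : ∀ᶠ k in Filter.cofinite, g.eval k ∣ f.eval k := by
        rw [Filter.eventually_cofinite]
        refine Set.Finite.subset (g.finite_setOf_isRoot hg) fun k hk => ?_
        by_contra h0
        exact hk (hfg k h0)
      obtain ⟨q, hq⟩ := hD f g hev
      rcases eq_or_ne f 0 with rfl | hf
      · exact Or.inl rfl
      · right
        have hF : f.map (algebraMap R (FractionRing R)) ≠ 0 :=
          (Polynomial.map_ne_zero_iff hinj).mpr hf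
        have hq0 : q ≠ 0 := by
          rintro rfl
          rw [zero_mul] at hq
          exact hF hq
        calc g.degree = (g.map (algebraMap R (FractionRing R))).degree :=
              (degree_map_eq_of_injective hinj g).symm
          _ ≤ ((g.map (algebraMap R (FractionRing R))) * q).degree :=
              degree_le_mul_left _ hq0
          _ = (f.map (algebraMap R (FractionRing R))).degree := by rw [mul_comm, ← hq]
          _ = f.degree := degree_map_eq_of_injective hinj f
  · intro H f g hev
    have hS : {k : R | ¬ g.eval k ∣ f.eval k}.Finite := Filter.eventually_cofinite.mp hev
    set P : R[X] := ∏ s ∈ hS.toFinset, (X - C s) with hPdef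
    have hPmonic : P.Monic := monic_prod_of_monic _ _ fun s _ => monic_X_sub_C s
    have hPne : P ≠ 0 := hPmonic.ne_zero
    have hPzero : ∀ k : R, ¬ g.eval k ∣ f.eval k → P.eval k = 0 := by
      intro k hk
      rw [hPdef, eval_prod]
      exact Finset.prod_eq_zero (hS.mem_toFinset.mpr hk) (by simp)
    rcases eq_or_ne g 0 with rfl | hg
    · -- here 0 ∣ f.eval k for cofinitely many k, so f = 0
      have hf : f = 0 := by
        by_contra hf
        have h0 : ∀ k : R, (f * P).eval k = 0 := by
          intro k
          rw [eval_mul]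
          by_cases hk : eval k 0 ∣ f.eval k
          · have hfk : f.eval k = 0 := zero_dvd_iff.mp (by simpa using hk)
            rw [hfk, zero_mul]
          · rw [hPzero k hk, mul_zero]
        rcases H 1 (f * P) (fun k hk => absurd (h0 k) hk) with h1 | hdeg
        · exact one_ne_zero h1
        · rw [degree_one] at hdeg
          have hfP : f * P ≠ 0 := mul_ne_zero hf hPne
          have hC := eq_C_of_degree_le_zero hdeg
          have hc0 : (f * P).coeff 0 = 0 := by
            have h00 := h0 0
            rw [hC, eval_C] at h00
            exact h00
          exact hfP (by rw [hC, hc0, C_0])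
      subst hf
      exact ⟨0, by simp⟩
    · set K := FractionRing R
      set F := f.map (algebraMap R K) with hFdef
      set G := g.map (algebraMap R K) with hGdef
      have hG : G ≠ 0 := (Polynomial.map_ne_zero_iff hinj).mpr hg
      obtain ⟨b, hb⟩ := IsLocalization.integerNormalization_map_to_map
        (nonZeroDivisors R) (F / G)
      set c : R := (b : R) with hcdef
      have hc : c ≠ 0 := nonZeroDivisors.ne_zero b.2
      set cK : K := algebraMap R K c with hcKdef
      have hcK : cK ≠ 0 := fun h => hc ((map_eq_zero_iff _ hinj).mp h)
      set q' : R[X] := IsLocalization.integerNormalization (nonZeroDivisors R) (F / G)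
        with hq'def
      have hb' : q'.map (algebraMap R K) = C cK * (F / G) := by
        rw [hb, ← algebraMap_smul K (b : R) (F / G), smul_eq_C_mul]
      set r' : R[X] := C c * f - q' * g with hr'def
      have hrmap : r'.map (algebraMap R K) = C cK * (F % G) := by
        rw [hr'def, Polynomial.map_sub, Polynomial.map_mul, Polynomial.map_mul, map_C, hb',
          ← hFdef, ← hGdef, ← hcKdef]
        rw [EuclideanDomain.mod_eq_sub_mul_div F G]
        ring
      have hdegr : r'.degree < g.degree := by
        rw [← degree_map_eq_of_injective hinj r', ← degree_map_eq_of_injective hinj g, hrmap,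
          ← hGdef]
        calc (C cK * (F % G)).degree = (F % G).degree := by rw [degree_C_mul hcK]
          _ < G.degree := EuclideanDomain.mod_lt _ hG
      by_cases hr : r' = 0
      · -- C c * f = q' * g
        have hkey : C c * f = q' * g := by
          have := sub_eq_zero.mp hr
          linear_combination this
        refine ⟨C cK⁻¹ * q'.map (algebraMap R K), ?_⟩
        have hmap : C cK * F = q'.map (algebraMap R K) * G := by
          have := congrArg (Polynomial.map (algebraMap R K)) hkey
          rwa [Polynomial.map_mul, Polynomial.map_mul, map_C, ← hFdef, ← hGdef, ← hcKdef] at this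
        calc F = C cK⁻¹ * (C cK * F) := by
              rw [← mul_assoc, ← C_mul, inv_mul_cancel₀ hcK, C_1, one_mul]
          _ = C cK⁻¹ * q'.map (algebraMap R K) * G := by rw [hmap, mul_assoc]
      · exfalso
        have hdvd : ∀ k : R, (g * P).eval k ≠ 0 → (g * P).eval k ∣ (r' * P).eval k := by
          intro k hk
          simp only [eval_mul] at hk ⊢
          have hgk : g.eval k ≠ 0 := left_ne_zero_of_mul hk
          have hPk : P.eval k ≠ 0 := right_ne_zero_of_mul hk
          have hkS : g.eval k ∣ f.eval k := by
            by_contra hkS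
            exact hPk (hPzero k hkS)
          have : g.eval k ∣ r'.eval k := by
            rw [hr'def, eval_sub, eval_mul, eval_mul, eval_C]
            exact dvd_sub (Dvd.dvd.mul_left hkS c) (Dvd.intro_left _ rfl)
          exact mul_dvd_mul this dvd_rfl
        rcases H (r' * P) (g * P) hdvd with h0 | hd
        · exact (mul_ne_zero hr hPne) h0
        · rw [degree_mul, degree_mul] at hd
          have hPbot : P.degree ≠ ⊥ := degree_ne_bot.mpr hPne
          have : g.degree ≤ r'.degree :=
            (WithBot.add_le_add_iff_right hPbot).mp hd
          exact absurd (lt_of_le_of_lt this hdegr) (lt_irrefl _)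
end

section
/- Let f(x), g(x) be polynomials in ℤ[x] such that for every integer k with g(k) ≠ 0, g(k) divides f(k) in ℤ. Then f(x) = 0 or deg g ≤ deg f. -/
/-!
If `deg f < deg g`, then `|f(k)| < |g(k)|` for all but finitely many integers `k`; at such `k`
we have `g(k) ≠ 0`, and a multiple of `g(k)` smaller than it in absolute value is `0`.
So `f` has infinitely many integer roots and vanishes.
-/

open Polynomial

theorem Polynomial.eq_zero_of_eval_dvd_of_degree_lt {f g : ℤ[X]}
    (h : ∀ k : ℤ, g.eval k ≠ 0 → g.eval k ∣ f.eval k) (hlt : f.degree < g.degree) : f = 0 := by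
  apply eq_zero_of_infinite_isRoot
  refine (finite_abs_eval_le_of_degree_lt hlt).infinite_compl.mono fun k hk => ?_
  simp only [Set.mem_compl_iff, Set.mem_ofPred_eq, not_le] at hk
  have hg : g.eval k ≠ 0 := abs_pos.mp ((abs_nonneg _).trans_lt hk)
  exact Int.eq_zero_of_abs_lt_dvd ((abs_dvd _ _).2 (h k hg)) hk

theorem int_degree_le_of_eval_dvd (f g : Polynomial ℤ)
    (h : ∀ k : ℤ, g.eval k ≠ 0 → g.eval k ∣ f.eval k) :
    f = 0 ∨ g.degree ≤ f.degree := by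
  rcases le_or_gt g.degree f.degree with hle | hlt
  · exact Or.inr hle
  · exact Or.inl (eq_zero_of_eval_dvd_of_degree_lt h hlt)
end

section
/- Let R be an integrally closed integral domain with field of fractions K, let K ⊆ L be a finite Galois extension of fields, and let C be the integral closure of R in L. If R is a D-ring, then C is a D-ring. -/
/-!
Let `C` be the integral closure of `R` in `L` and let `g(k) ∣ f(k)` in `C` for almost all `k`.
The product `P = ∏_{σ ≠ 1} σ g` of the other Galois conjugates of `g` has integral coefficients and
`n = g P = ∏_σ σ g` is Galois invariant, so `n ∈ R[X]`; moreover `n(k) ∣ (f P)(k)` in `C` for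
almost all `k ∈ R`. It therefore suffices to show `n ∣ p` in `L[X]` whenever `p` has integral
coefficients and `n(k) ∣ p(k)` in `C` for almost all `k ∈ R`. Expand `p` in the trace-dual basis
of a `K`-basis of `L` made of integral elements: each coordinate polynomial lies in `R[X]`, its
value at `k` is `n(k)` times a trace of an integral element, hence divisible by `n(k)` in `R`,
and the D-ring property of `R` lets `n` divide it in `K[X]`.
-/

open Polynomial

namespace Polynomial

section MapLinear

variable {K L : Type*} [CommSemiring K] [Semiring L] [Algebra K L]

noncomputable def mapLinear (φ : L →ₗ[K] K) (p : L[X]) : K[X] :=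
  p.sum fun n a => monomial n (φ a)

theorem coeff_mapLinear (φ : L →ₗ[K] K) (p : L[X]) (m : ℕ) :
    (p.mapLinear φ).coeff m = φ (p.coeff m) := by
  rw [mapLinear, coeff_sum, sum_def]
  simp only [coeff_monomial, Finset.sum_ite_eq']
  split_ifs with h
  · rfl
  · rw [notMem_support_iff.1 h, map_zero]

theorem eval_mapLinear (φ : L →ₗ[K] K) (p : L[X]) (k : K) :
    (p.mapLinear φ).eval k = φ (p.eval (algebraMap K L k)) := by
  rw [mapLinear, sum_def, eval_finsetSum, eval_eq_sum, sum_def, map_sum]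
  refine Finset.sum_congr rfl fun n _ => ?_
  rw [eval_monomial, ← map_pow, ← Algebra.commutes, ← Algebra.smul_def, map_smul, smul_eq_mul,
    mul_comm]

theorem sum_map_mapLinear_coord_mul_C {ι : Type*} [Fintype ι] (b : Module.Basis ι K L)
    (p : L[X]) : ∑ i, (p.mapLinear (b.coord i)).map (algebraMap K L) * C (b i) = p := by
  ext m
  simp only [finsetSum_coeff, coeff_mul_C, coeff_map, coeff_mapLinear, Module.Basis.coord_apply,
    ← Algebra.smul_def, b.sum_repr]

end MapLinear

end Polynomial

theorem IsFractionRing.map_dvd_map {R : Type*} [CommRing R] (K K' : Type*) [CommRing K]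
    [CommRing K'] [Algebra R K] [Algebra R K'] [IsFractionRing R K] [IsFractionRing R K']
    {f g : R[X]}
    (h : g.map (algebraMap R K) ∣ f.map (algebraMap R K)) :
    g.map (algebraMap R K') ∣ f.map (algebraMap R K') := by
  let e : K ≃ₐ[R] K' := IsLocalization.algEquiv (nonZeroDivisors R) K K'
  have he : (e : K →+* K').comp (algebraMap R K) = algebraMap R K' := e.toAlgHom.comp_algebraMap
  simpa only [map_map, he] using Polynomial.map_dvd (e : K →+* K') h

theorem isDRing_iff_map_dvd_map (R : Type*) [CommRing R] [IsDomain R] (K : Type*) [CommRing K]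
    [Algebra R K] [IsFractionRing R K] :
    IsDRing R ↔ ∀ f g : R[X], (∀ᶠ k in Filter.cofinite, g.eval k ∣ f.eval k) →
      g.map (algebraMap R K) ∣ f.map (algebraMap R K) := by
  refine forall₂_congr fun f g => imp_congr_right fun _ => ?_
  refine ⟨fun ⟨q, hq⟩ => IsFractionRing.map_dvd_map _ K ⟨q, hq.trans (mul_comm _ _)⟩,
    fun h => ?_⟩
  obtain ⟨q, hq⟩ := IsFractionRing.map_dvd_map K (FractionRing R) h
  exact ⟨q, hq.trans (mul_comm _ _)⟩

section IntegralDescent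

variable {R : Type*} (K : Type*) {L : Type*} [CommRing R] [IsIntegrallyClosed R] [Field K]
  [Algebra R K] [IsFractionRing R K] [Field L] [Algebra K L] [Algebra R L] [IsScalarTower R K L]
  [FiniteDimensional K L]

theorem Module.Basis.dualBasis_repr_mem_range_of_isIntegral [Algebra.IsSeparable K L]
    {ι : Type*} [Finite ι] [DecidableEq ι] (b : Module.Basis ι K L)
    (hb : ∀ i, IsIntegral R (b i)) {x : L} (hx : IsIntegral R x) (i : ι) :
    ((Algebra.traceForm K L).dualBasis (traceForm_nondegenerate K L) b).repr x i ∈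
      Set.range (algebraMap R K) := by
  rw [LinearMap.BilinForm.dualBasis_repr_apply, Algebra.traceForm_apply]
  exact IsIntegrallyClosed.isIntegral_iff.1 (Algebra.isIntegral_trace (hx.mul (hb i)))

theorem IsGalois.mem_range_algebraMap_of_isIntegral [IsGalois K L] {x : L}
    (hx : IsIntegral R x) (hfix : ∀ σ : Gal(L/K), σ x = x) :
    x ∈ Set.range (algebraMap R L) := by
  obtain ⟨y, rfl⟩ := (IsGalois.mem_range_algebraMap_iff_fixed x).2 hfix
  obtain ⟨r, rfl⟩ := IsIntegrallyClosed.isIntegral_iff.1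
    ((isIntegral_algebraMap_iff (algebraMap K L).injective).1 hx)
  exact ⟨r, IsScalarTower.algebraMap_apply R K L r⟩

theorem IsGalois.mem_lifts_of_isIntegral_coeff [IsGalois K L] {p : L[X]}
    (hp : ∀ m, IsIntegral R (p.coeff m)) (hfix : ∀ σ : Gal(L/K), p.map (σ : L →+* L) = p) :
    p ∈ lifts (algebraMap R L) :=
  (lifts_iff_coeff_lifts p).2 fun m => mem_range_algebraMap_of_isIntegral K (hp m) fun σ =>
    (coeff_map _ m).symm.trans (congrArg (coeff · m) (hfix σ))

theorem IsGalois.exists_mul_eq_map_of_isIntegral_coeff [IsGalois K L] (g : L[X])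
    (hg : ∀ m, IsIntegral R (g.coeff m)) :
    ∃ P : L[X], P ≠ 0 ∧ (∀ m, IsIntegral R (P.coeff m)) ∧
      ∃ n : R[X], n.map (algebraMap R L) = g * P := by
  classical
  rcases eq_or_ne g 0 with rfl | hg0
  · refine ⟨1, one_ne_zero, fun m => ?_, 0, by rw [Polynomial.map_zero, zero_mul]⟩
    rw [coeff_one]
    split_ifs
    exacts [isIntegral_one, isIntegral_zero]
  have hσ (σ : Gal(L/K)) (m : ℕ) : IsIntegral R ((g.map (σ : L →+* L)).coeff m) := by
    rw [coeff_map]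
    exact (hg m).map ((σ : L →ₐ[K] L).restrictScalars R)
  have hnorm : g * ∏ σ ∈ (Finset.univ : Finset Gal(L/K)).erase 1, g.map (σ : L →+* L) =
      ∏ σ : Gal(L/K), g.map (σ : L →+* L) := by
    rw [← Finset.mul_prod_erase _ _ (Finset.mem_univ 1)]
    exact congrArg (· * _) (map_id (R := L)).symm
  refine ⟨∏ σ ∈ (Finset.univ : Finset Gal(L/K)).erase 1, g.map (σ : L →+* L),
    Finset.prod_ne_zero_iff.2 fun σ _ => map_ne_zero hg0,
    isIntegral_coeff_prod _ _ fun σ _ => hσ σ, ?_⟩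
  rw [hnorm, ← mem_lifts]
  refine mem_lifts_of_isIntegral_coeff K (isIntegral_coeff_prod _ _ fun σ _ => hσ σ) fun τ => ?_
  simp only [Polynomial.map_prod, map_map]
  exact Fintype.prod_equiv (Equiv.mulLeft τ) _ _ fun σ => rfl

theorem IsDRing.map_dvd_of_eventually_eval_eq_mul [IsDomain R] [Algebra.IsSeparable K L]
    (hR : IsDRing R) {p : L[X]} (hp : ∀ m, IsIntegral R (p.coeff m)) (n : R[X])
    (hpn : ∀ᶠ k in Filter.cofinite, ∃ c, IsIntegral R c ∧
      p.eval (algebraMap R L k) = algebraMap R L (n.eval k) * c) :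
    n.map (algebraMap R L) ∣ p := by
  classical
  obtain ⟨s, b, hb⟩ := FiniteDimensional.exists_is_basis_integral R K L
  set b' := (Algebra.traceForm K L).dualBasis (traceForm_nondegenerate K L) b
  rw [← sum_map_mapLinear_coord_mul_C b' p]
  refine Finset.dvd_sum fun i _ => dvd_mul_of_dvd_left ?_ _
  obtain ⟨H, hH⟩ := (mem_lifts _).1 <|
    (lifts_iff_coeff_lifts (p.mapLinear (b'.coord i)) (f := algebraMap R K)).2 fun m => by
      rw [coeff_mapLinear]
      exact b.dualBasis_repr_mem_range_of_isIntegral K hb (hp m) i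
  rw [← hH, IsScalarTower.algebraMap_eq R K L, ← map_map]
  refine Polynomial.map_dvd _ ((isDRing_iff_map_dvd_map R K).1 hR H n ?_)
  filter_upwards [hpn] with k ⟨c, hc, hpk⟩
  obtain ⟨r, hr⟩ : b'.repr c i ∈ Set.range (algebraMap R K) :=
    b.dualBasis_repr_mem_range_of_isIntegral K hb hc i
  refine ⟨r, IsFractionRing.injective R K ?_⟩
  calc algebraMap R K (H.eval k)
      = b'.coord i (p.eval (algebraMap R L k)) := by
        rw [← eval₂_hom, ← eval_map, hH, eval_mapLinear, ← IsScalarTower.algebraMap_apply]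
    _ = algebraMap R K (n.eval k * r) := by
        rw [hpk, IsScalarTower.algebraMap_apply R K L, ← Algebra.smul_def, map_smul,
          Module.Basis.coord_apply, ← hr, smul_eq_mul, map_mul]

end IntegralDescent

theorem integralClosure_isDRing
    (R : Type*) [CommRing R] [IsDomain R] [IsIntegrallyClosed R]
    (K : Type*) [Field K] [Algebra R K] [IsFractionRing R K]
    (L : Type*) [Field L] [Algebra K L] [Algebra R L] [IsScalarTower R K L]
    [FiniteDimensional K L] [IsGalois K L]
    (hR : IsDRing R) : IsDRing (integralClosure R L) := by
  have := integralClosure.isFractionRing_of_finite_extension (A := R) K L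
  have : Module.IsTorsionFree R L := .trans_faithfulSMul R K L
  refine (isDRing_iff_map_dvd_map _ L).2 fun f g hfg => ?_
  have hcoeff (p : (integralClosure R L)[X]) (m : ℕ) :
      IsIntegral R ((p.map (algebraMap _ L)).coeff m) := by
    rw [coeff_map]
    exact (p.coeff m).2
  obtain ⟨P, hP0, hPint, n, hn⟩ := IsGalois.exists_mul_eq_map_of_isIntegral_coeff K _ (hcoeff g)
  rw [← mul_dvd_mul_iff_right hP0, ← hn]
  refine hR.map_dvd_of_eventually_eval_eq_mul K (fun m => ?_) n ?_
  · rw [coeff_mul]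
    exact IsIntegral.sum _ fun x _ => (hcoeff f _).mul (hPint _)
  have hinj : Function.Injective (algebraMap R (integralClosure R L)) :=
    FaithfulSMul.algebraMap_injective _ _
  filter_upwards [hinj.tendsto_cofinite.eventually hfg] with k ⟨c, hc⟩
  have hev (p : (integralClosure R L)[X]) : (p.map (algebraMap _ L)).eval (algebraMap R L k) =
      p.eval (algebraMap R (integralClosure R L) k) := by
    rw [IsScalarTower.algebraMap_apply R (integralClosure R L) L, eval_map, eval₂_hom]
    rfl
  refine ⟨c, c.2, ?_⟩
  rw [← eval₂_hom, ← eval_map, hn, eval_mul, eval_mul, hev f, hev g, hc, MulMemClass.coe_mul]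
  ring
end

section
/- Let ℚ ⊆ L be a finite Galois extension of fields. Then the ring of algebraic integers 𝒪_L in L (the integral closure of ℤ in L) is a D-ring. -/
open Polynomial

lemma int_poly_eq_zero_of_dvd (A B : Polynomial ℤ) (hdeg : B.degree < A.degree)
    (h : ∀ᶠ k in Filter.cofinite, A.eval k ∣ B.eval k) : B = 0 := by
  by_contra hB
  have hroots : ∀ᶠ k in (Filter.cofinite : Filter ℤ), B.eval k ≠ 0 :=
    Filter.eventually_cofinite.mpr (by simpa using Polynomial.finite_setOf_isRoot hB)
  have hcomb : ∀ᶠ k in (Filter.cofinite : Filter ℤ),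
      (1 : ℝ) ≤ |((B.eval k : ℤ) : ℝ) / ((A.eval k : ℤ) : ℝ)| := by
    filter_upwards [h, hroots] with k hdvd hBk
    have hAk : A.eval k ≠ 0 := by
      rintro h0
      rw [h0, zero_dvd_iff] at hdvd
      exact hBk hdvd
    have hle : |A.eval k| ≤ |B.eval k| :=
      Int.le_of_dvd (abs_pos.mpr hBk) ((abs_dvd _ _).mpr ((dvd_abs _ _).mpr hdvd))
    rw [abs_div]
    rw [le_div_iff₀ (by exact_mod_cast abs_pos.mpr hAk)]
    rw [one_mul, ← Int.cast_abs, ← Int.cast_abs]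
    exact_mod_cast hle
  have hatTop : ∀ᶠ k in (Filter.atTop : Filter ℤ),
      (1 : ℝ) ≤ |((B.eval k : ℤ) : ℝ) / ((A.eval k : ℤ) : ℝ)| := by
    refine hcomb.filter_mono ?_
    rw [Int.cofinite_eq]
    exact le_sup_right
  have hdegR : (B.map (Int.castRingHom ℝ)).degree < (A.map (Int.castRingHom ℝ)).degree := by
    rwa [degree_map_eq_of_injective Int.cast_injective,
      degree_map_eq_of_injective Int.cast_injective]
  have htend := Polynomial.div_tendsto_zero_of_degree_lt _ _ hdegR
  have htend2 : Filter.Tendsto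
      (fun k : ℤ => ((B.eval k : ℤ) : ℝ) / ((A.eval k : ℤ) : ℝ)) Filter.atTop (nhds 0) := by
    have := htend.comp (tendsto_intCast_atTop_atTop (R := ℝ))
    refine this.congr fun k => ?_
    simp only [Function.comp_apply]
    rw [Polynomial.eval_intCast_map, Polynomial.eval_intCast_map]
    norm_num
  have := (htend2.abs.eventually_lt_const (by norm_num : |(0:ℝ)| < 1)).and hatTop
  rcases this.exists with ⟨k, h1, h2⟩
  linarith

set_option maxHeartbeats 1000000 in
/-- If `ℚ ⊆ L` is a finite Galois extension, then the ring of algebraic integers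
`𝒪_L = integralClosure ℤ L` is a D-ring. -/
theorem ringOfIntegers_isDRing
    (L : Type*) [Field L] [Algebra ℚ L] [FiniteDimensional ℚ L] [IsGalois ℚ L] :
    IsDRing (integralClosure ℤ L) := by
  classical
  haveI : CharZero L := charZero_of_injective_algebraMap (algebraMap ℚ L).injective
  haveI : IsScalarTower ℤ ℚ L := IsScalarTower.of_algebraMap_eq fun x => by
    rw [eq_intCast (algebraMap ℤ L), eq_intCast (algebraMap ℤ ℚ), map_intCast]
  haveI : IsFractionRing (integralClosure ℤ L) L :=
    integralClosure.isFractionRing_of_finite_extension ℚ L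
  haveI : CharZero (integralClosure ℤ L) := by
    constructor
    intro a b hab
    have : ((a : ℕ) : L) = ((b : ℕ) : L) := by
      exact_mod_cast congrArg (algebraMap (integralClosure ℤ L) L) hab
    exact_mod_cast this
  intro f g hfg
  let φ : (integralClosure ℤ L) →+* L := algebraMap (integralClosure ℤ L) L
  have φinj : Function.Injective φ := IsFractionRing.injective (integralClosure ℤ L) L
  -- reduce to working over L
  suffices hsuf : ∃ qL : L[X], f.map φ = qL * g.map φ by
    obtain ⟨qL, hq⟩ := hsuf
    let e : FractionRing (integralClosure ℤ L) ≃ₐ[integralClosure ℤ L] L :=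
      FractionRing.algEquiv (integralClosure ℤ L) L
    refine ⟨qL.map e.symm.toRingEquiv.toRingHom, ?_⟩
    have hcomp : ∀ p : (integralClosure ℤ L)[X], (p.map φ).map e.symm.toRingEquiv.toRingHom
        = p.map (algebraMap (integralClosure ℤ L) (FractionRing (integralClosure ℤ L))) := by
      intro p
      rw [Polynomial.map_map]
      congr 1
      ext a
      exact e.symm.commutes a
    rw [← hcomp f, ← hcomp g, hq, Polynomial.map_mul]
  -- trivial case : g = 0
  by_cases hg0 : g = 0
  · have hf : f = 0 := by
      haveI : Infinite (integralClosure ℤ L) :=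
        Infinite.of_injective (fun n : ℤ => (n : integralClosure ℤ L)) Int.cast_injective
      apply Polynomial.eq_zero_of_infinite_isRoot
      have hfin : {k : integralClosure ℤ L | ¬ f.eval k = 0}.Finite := by
        rw [← Filter.eventually_cofinite]
        filter_upwards [hfg] with k hk
        simpa [hg0] using hk
      have h2 := hfin.infinite_compl
      have : {k : integralClosure ℤ L | ¬ f.eval k = 0}ᶜ = {x | f.IsRoot x} := by
        ext x; simp [Polynomial.IsRoot]
      rwa [this] at h2
    exact ⟨0, by rw [hf, hg0]; simp⟩
  -- main case
  have hgL0 : g.map φ ≠ 0 := fun hz => hg0 ((Polynomial.map_eq_zero_iff φinj).mp hz)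
  obtain ⟨cq, hcq⟩ := IsLocalization.integerNormalization_map_to_map
    (nonZeroDivisors (integralClosure ℤ L)) (f.map φ / g.map φ)
  obtain ⟨cr, hcr⟩ := IsLocalization.integerNormalization_map_to_map
    (nonZeroDivisors (integralClosure ℤ L)) (f.map φ % g.map φ)
  have hφeq : algebraMap (integralClosure ℤ L) L = φ := rfl
  rw [hφeq] at hcq hcr
  set Q : (integralClosure ℤ L)[X] := IsLocalization.integerNormalization
    (nonZeroDivisors (integralClosure ℤ L)) (f.map φ / g.map φ) with hQ
  set R : (integralClosure ℤ L)[X] := IsLocalization.integerNormalization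
    (nonZeroDivisors (integralClosure ℤ L)) (f.map φ % g.map φ) with hR
  have hsmul : ∀ (c : integralClosure ℤ L) (p : L[X]), (c • p) = C (φ c) * p := by
    intro c p
    ext n
    rw [Polynomial.coeff_smul, Polynomial.coeff_C_mul, Algebra.smul_def]
  set h : (integralClosure ℤ L)[X] :=
    C ((cq : integralClosure ℤ L) * (cr : integralClosure ℤ L)) * f - (C (cr : integralClosure ℤ L) * Q) * g with hh
  have hmaph : h.map φ = C (φ ((cq : integralClosure ℤ L) * (cr : integralClosure ℤ L))) *
      (f.map φ % g.map φ) := by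
    have hfd : f.map φ = (g.map φ) * (f.map φ / g.map φ) + f.map φ % g.map φ :=
      (EuclideanDomain.div_add_mod _ _).symm
    rw [hh]
    simp only [Polynomial.map_sub, Polynomial.map_mul, Polynomial.map_C]
    rw [hcq, hsmul]
    simp only [map_mul, Polynomial.C_mul]
    linear_combination (C (φ (cq : integralClosure ℤ L)) * C (φ (cr : integralClosure ℤ L))) * hfd
  have hdvdh : ∀ᶠ k in Filter.cofinite, g.eval k ∣ h.eval k := by
    filter_upwards [hfg] with k hk
    rw [hh]
    simp only [Polynomial.eval_sub, Polynomial.eval_mul, Polynomial.eval_C]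
    exact dvd_sub (hk.mul_left _) (dvd_mul_left _ _)
  have hcc0 : φ ((cq : integralClosure ℤ L) * (cr : integralClosure ℤ L)) ≠ 0 := by
    rw [map_ne_zero_iff φ φinj]
    exact mul_ne_zero (nonZeroDivisors.coe_ne_zero cq) (nonZeroDivisors.coe_ne_zero cr)
  have hdegh : h.degree < g.degree := by
    rw [← degree_map_eq_of_injective φinj h, ← degree_map_eq_of_injective φinj g, hmaph,
      Polynomial.degree_C_mul hcc0]
    exact EuclideanDomain.mod_lt _ hgL0
  -- Galois descent: h = 0
  have hzero : h = 0 := by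
    by_contra hh0
    have hresmem : ∀ (σ : L ≃ₐ[ℚ] L) (x : integralClosure ℤ L),
        ((σ.toAlgHom.restrictScalars ℤ).comp
          (IsScalarTower.toAlgHom ℤ (integralClosure ℤ L) L)) x ∈ integralClosure ℤ L :=
      by
        intro σ x
        have hx : IsIntegral ℤ (x : L) := x.2
        exact hx.map (σ.toAlgHom.restrictScalars ℤ)
    let res : (L ≃ₐ[ℚ] L) → ((integralClosure ℤ L) →ₐ[ℤ] (integralClosure ℤ L)) := fun σ =>
      AlgHom.codRestrict _ _ (hresmem σ)
    have hres : ∀ (σ : L ≃ₐ[ℚ] L) (x : integralClosure ℤ L), φ (res σ x) = σ (φ x) :=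
      fun σ x => rfl
    have hresinj : ∀ σ, Function.Injective (res σ) := by
      intro σ a b hab
      have h1 : σ (φ a) = σ (φ b) := by rw [← hres, ← hres, hab]
      exact φinj (σ.injective h1)
    set NN : (integralClosure ℤ L)[X] → (integralClosure ℤ L)[X] :=
      fun p => ∏ σ : L ≃ₐ[ℚ] L, p.map (res σ).toRingHom with hNN
    have hNmapL : ∀ p : (integralClosure ℤ L)[X],
        (NN p).map φ = ∏ σ : L ≃ₐ[ℚ] L, (p.map φ).map σ.toAlgHom.toRingHom := by
      intro p
      rw [hNN]
      rw [Polynomial.map_prod]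
      refine Finset.prod_congr rfl fun σ _ => ?_
      rw [Polynomial.map_map, Polynomial.map_map]
      congr 1
    have hfix : ∀ (p : (integralClosure ℤ L)[X]) (τ : L ≃ₐ[ℚ] L) (n : ℕ),
        τ (φ ((NN p).coeff n)) = φ ((NN p).coeff n) := by
      intro p τ n
      have hinv : ((NN p).map φ).map τ.toAlgHom.toRingHom = (NN p).map φ := by
        rw [hNmapL, Polynomial.map_prod]
        calc (∏ σ : L ≃ₐ[ℚ] L, ((p.map φ).map σ.toAlgHom.toRingHom).map τ.toAlgHom.toRingHom)
            = ∏ σ : L ≃ₐ[ℚ] L, (p.map φ).map (τ * σ).toAlgHom.toRingHom := by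
              refine Finset.prod_congr rfl fun σ _ => ?_
              rw [Polynomial.map_map]
              congr 1
          _ = ∏ σ : L ≃ₐ[ℚ] L, (p.map φ).map σ.toAlgHom.toRingHom := by
              exact Fintype.prod_equiv (Equiv.mulLeft τ)
                (fun σ => (p.map φ).map (τ * σ).toAlgHom.toRingHom)
                (fun σ => (p.map φ).map σ.toAlgHom.toRingHom) (fun σ => by
                  simp [Equiv.coe_mulLeft])
      have hc := congrArg (fun P => Polynomial.coeff P n) hinv
      simp only [Polynomial.coeff_map] at hc
      exact hc
    have hlift : ∀ p : (integralClosure ℤ L)[X],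
        ∃ P : ℤ[X], P.map (algebraMap ℤ (integralClosure ℤ L)) = NN p := by
      intro p
      rw [← Polynomial.mem_lifts, Polynomial.lifts_iff_coeff_lifts]
      intro n
      have hfixc : φ ((NN p).coeff n) ∈
          IntermediateField.fixedField (⊤ : Subgroup (L ≃ₐ[ℚ] L)) := by
        rintro ⟨τ, -⟩
        exact hfix p τ n
      have hbot : IntermediateField.fixedField (⊤ : Subgroup (L ≃ₐ[ℚ] L)) =
          (⊥ : IntermediateField ℚ L) :=
        ((IsGalois.tfae (F := ℚ) (E := L)).out 0 1).mp (inferInstance : IsGalois ℚ L)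
      rw [hbot] at hfixc
      obtain ⟨qq, hqq⟩ := IntermediateField.mem_bot.mp hfixc
      have hint : IsIntegral ℤ (algebraMap ℚ L qq) := by
        rw [hqq]; exact ((NN p).coeff n).2
      have hqint : IsIntegral ℤ qq :=
        (isIntegral_algHom_iff (IsScalarTower.toAlgHom ℤ ℚ L)
          (algebraMap ℚ L).injective).mp hint
      obtain ⟨m, hm⟩ := IsIntegrallyClosed.isIntegral_iff.mp hqint
      refine ⟨m, ?_⟩
      apply φinj
      show φ (algebraMap ℤ _ m) = φ ((NN p).coeff n)
      rw [← IsScalarTower.algebraMap_apply ℤ (integralClosure ℤ L) L,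
        IsScalarTower.algebraMap_apply ℤ ℚ L, hm, hqq]
    obtain ⟨G1, hG1⟩ := hlift g
    obtain ⟨H1, hH1⟩ := hlift h
    have hιinj : Function.Injective (algebraMap ℤ (integralClosure ℤ L)) := by
      intro a b hab
      rwa [eq_intCast (algebraMap ℤ (integralClosure ℤ L)),
        eq_intCast (algebraMap ℤ (integralClosure ℤ L)), Int.cast_inj] at hab
    have intdvd : ∀ m n : ℤ,
        ((m : integralClosure ℤ L) ∣ (n : integralClosure ℤ L)) → m ∣ n := by
      rintro m n ⟨c, hc⟩
      by_cases hm : m = 0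
      · subst hm
        rw [Int.cast_zero, zero_mul] at hc
        have : n = 0 := by exact_mod_cast hc
        simp [this]
      · have hmL : ((m : ℚ) : L) ≠ 0 := by exact_mod_cast hm
        have hm' : (m : ℚ) ≠ 0 := by exact_mod_cast hm
        have hcL : algebraMap ℚ L ((n : ℚ) / (m : ℚ)) = φ c := by
          have h1 : ((n : L)) = ((m : L)) * φ c := by exact_mod_cast congrArg φ hc
          have hm'' : algebraMap ℚ L (m : ℚ) ≠ 0 := by
            rw [map_ne_zero_iff _ (algebraMap ℚ L).injective]
            exact hm'
          rw [map_div₀, div_eq_iff hm'', map_intCast, map_intCast]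
          rw [h1]
          ring
        have hcint : IsIntegral ℤ ((n : ℚ) / (m : ℚ)) :=
          (isIntegral_algHom_iff (IsScalarTower.toAlgHom ℤ ℚ L)
            (algebraMap ℚ L).injective).mp (by rw [show ((IsScalarTower.toAlgHom ℤ ℚ L) _ : L) = φ c from hcL]; exact c.2)
        obtain ⟨y, hy⟩ := IsIntegrallyClosed.isIntegral_iff.mp hcint
        refine ⟨y, ?_⟩
        have hq : (n : ℚ) = (m : ℚ) * (y : ℚ) := by
          rw [eq_intCast (algebraMap ℤ ℚ)] at hy
          rw [hy]
          field_simp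
        exact_mod_cast hq
    have hdvdZ : ∀ᶠ k : ℤ in Filter.cofinite, G1.eval k ∣ H1.eval k := by
      have hpull : ∀ᶠ k : ℤ in Filter.cofinite,
          g.eval ((k : ℤ) : integralClosure ℤ L) ∣ h.eval ((k : ℤ) : integralClosure ℤ L) :=
        (Function.Injective.tendsto_cofinite
          (Int.cast_injective (α := integralClosure ℤ L))).eventually hdvdh
      filter_upwards [hpull] with k hk
      have hO : (NN g).eval ((k : ℤ) : integralClosure ℤ L) ∣
          (NN h).eval ((k : ℤ) : integralClosure ℤ L) := by
        rw [hNN]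
        rw [Polynomial.eval_prod, Polynomial.eval_prod]
        apply Finset.prod_dvd_prod_of_dvd
        intro σ _
        rw [Polynomial.eval_intCast_map, Polynomial.eval_intCast_map]
        exact map_dvd _ hk
      rw [← hG1, ← hH1, Polynomial.eval_intCast_map, Polynomial.eval_intCast_map] at hO
      have hO' : ((G1.eval k : ℤ) : integralClosure ℤ L) ∣ ((H1.eval k : ℤ) : integralClosure ℤ L) := by
        simpa [eq_intCast (algebraMap ℤ (integralClosure ℤ L))] using hO
      exact intdvd _ _ hO'
    have hNh0 : NN h ≠ 0 := by
      rw [hNN]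
      exact Finset.prod_ne_zero_iff.mpr fun σ _ =>
        (Polynomial.map_ne_zero_iff (hresinj σ)).mpr hh0
    have hdegZ : H1.degree < G1.degree := by
      have hH1ne : H1 ≠ 0 := fun hz => hNh0 (by rw [← hH1, hz, Polynomial.map_zero])
      rw [← Polynomial.natDegree_lt_natDegree_iff hH1ne]
      have hnd : ∀ p : (integralClosure ℤ L)[X], p ≠ 0 →
          (NN p).natDegree = (Fintype.card (L ≃ₐ[ℚ] L)) * p.natDegree := by
        intro p hp
        rw [hNN, Polynomial.natDegree_prod _ _
          (fun σ _ => (Polynomial.map_ne_zero_iff (hresinj σ)).mpr hp)]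
        have : ∀ σ : L ≃ₐ[ℚ] L, (p.map (res σ).toRingHom).natDegree = p.natDegree :=
          fun σ => Polynomial.natDegree_map_eq_of_injective (hresinj σ) p
        rw [Finset.sum_congr rfl fun σ _ => this σ, Finset.sum_const, Finset.card_univ,
          smul_eq_mul]
      have e1 : H1.natDegree = Fintype.card (L ≃ₐ[ℚ] L) * h.natDegree := by
        rw [← Polynomial.natDegree_map_eq_of_injective hιinj H1, hH1, hnd h hh0]
      have e2 : G1.natDegree = Fintype.card (L ≃ₐ[ℚ] L) * g.natDegree := by
        rw [← Polynomial.natDegree_map_eq_of_injective hιinj G1, hG1, hnd g hg0]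
      rw [e1, e2]
      exact (Nat.mul_lt_mul_left Fintype.card_pos).mpr
        ((Polynomial.natDegree_lt_natDegree_iff hh0).mpr hdegh)
    have hH1z := int_poly_eq_zero_of_dvd G1 H1 hdegZ hdvdZ
    exact hNh0 (by rw [← hH1, hH1z, Polynomial.map_zero])
  -- conclude
  have hr0 : f.map φ % g.map φ = 0 := by
    have := hmaph
    rw [hzero, Polynomial.map_zero] at this
    rcases mul_eq_zero.mp this.symm with h1 | h2
    · exact absurd (Polynomial.C_eq_zero.mp h1) hcc0
    · exact h2
  refine ⟨f.map φ / g.map φ, ?_⟩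
  conv_lhs => rw [← EuclideanDomain.div_add_mod (f.map φ) (g.map φ)]
  rw [hr0, add_zero, mul_comm]
end

section
/- Let f(x), g(x) be polynomials in ℤ[x] with g(x) primitive and deg g ≥ 1, such that for every integer k with g(k) ≠ 0, g(k) divides f(k) in ℤ. Then g(x) divides f(x) in ℤ[x]. -/
/-!
Pseudo-divide: `lc(g)^n f = g q + r` with `deg r < deg g`. Wherever `g(k) ∣ f(k)` also
`g(k) ∣ r(k)`, while `|r(k)| < |g(k)|` at all but finitely many integers `k`; hence `r` has
infinitely many roots and vanishes. So `g ∣ lc(g)^n f`, and a primitive `g` then divides `f`.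
-/

open Polynomial

namespace Polynomial

section PseudoDivision

variable {R : Type*} [CommRing R] [NoZeroDivisors R]

theorem degree_C_leadingCoeff_mul_sub_lt {f g : R[X]} (hg : g ≠ 0) (hgf : g.degree ≤ f.degree) :
    (C g.leadingCoeff * f - C f.leadingCoeff * X ^ (f.natDegree - g.natDegree) * g).degree
      < f.degree := by
  have hf : f ≠ 0 := by
    rintro rfl
    exact hg (degree_eq_bot.mp (le_bot_iff.mp (by simpa using hgf)))
  have ha : g.leadingCoeff ≠ 0 := leadingCoeff_ne_zero.mpr hg
  have hb : f.leadingCoeff ≠ 0 := leadingCoeff_ne_zero.mpr hf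
  have hle : g.natDegree ≤ f.natDegree := natDegree_le_natDegree hgf
  rw [← degree_C_mul (p := f) ha]
  refine degree_sub_lt_left ?_ (mul_ne_zero (C_ne_zero.mpr ha) hf) ?_
  · rw [degree_C_mul ha, degree_mul, degree_C_mul_X_pow _ hb, degree_eq_natDegree hf,
      degree_eq_natDegree hg, ← Nat.cast_add, Nat.sub_add_cancel hle]
  · rw [leadingCoeff_mul, leadingCoeff_mul, leadingCoeff_C_mul_X_pow, leadingCoeff_C, mul_comm]

theorem exists_C_leadingCoeff_pow_mul_eq_mul_add (f : R[X]) {g : R[X]} (hg : g ≠ 0) :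
    ∃ (n : ℕ) (q r : R[X]), C (g.leadingCoeff ^ n) * f = g * q + r ∧ r.degree < g.degree := by
  by_cases hfg : f.degree < g.degree
  · exact ⟨0, 0, f, by simp, hfg⟩
  have hlt := degree_C_leadingCoeff_mul_sub_lt hg (not_lt.mp hfg)
  obtain ⟨n, q, r, hqr, hr⟩ := exists_C_leadingCoeff_pow_mul_eq_mul_add
    (C g.leadingCoeff * f - C f.leadingCoeff * X ^ (f.natDegree - g.natDegree) * g) hg
  refine ⟨n + 1, q + C (g.leadingCoeff ^ n * f.leadingCoeff) * X ^ (f.natDegree - g.natDegree),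
    r, ?_, hr⟩
  rw [mul_sub] at hqr
  simp only [pow_succ, C_mul] at hqr ⊢
  linear_combination hqr
termination_by f.degree

end PseudoDivision

theorem IsPrimitive.dvd_of_dvd_C_mul {R : Type*} [CommRing R] [IsDomain R] [NormalizedGCDMonoid R]
    {p q : R[X]} (hp : p.IsPrimitive) {b : R} (hb : b ≠ 0) (h : p ∣ C b * q) : p ∣ q := by
  rcases eq_or_ne q 0 with rfl | hq
  · exact dvd_zero p
  have hbq : C b * q ≠ 0 := mul_ne_zero (C_ne_zero.mpr hb) hq
  rw [← hp.dvd_primPart_iff_dvd hbq] at h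
  calc p ∣ (C b * q).primPart := h
    _ ∣ (C b).primPart * q.primPart := (associated_primPart_mul hbq).dvd
    _ ∣ q.primPart := (isUnit_primPart_C b).mul_left_dvd.mpr dvd_rfl
    _ ∣ q := q.primPart_dvd

theorem eq_zero_of_infinite_eval_dvd_eval_of_degree_lt {r g : ℤ[X]} (hdeg : r.degree < g.degree)
    (h : {k | g.eval k ∣ r.eval k}.Infinite) : r = 0 := by
  refine eq_zero_of_infinite_isRoot r
    ((h.sdiff (finite_abs_eval_le_of_degree_lt hdeg)).mono fun k hk ↦ ?_)
  exact Int.eq_zero_of_abs_lt_dvd ((abs_dvd _ _).mpr hk.1) (not_le.mp hk.2)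

theorem IsPrimitive.dvd_of_infinite_eval_dvd_eval {f g : ℤ[X]} (hg : g.IsPrimitive)
    (h : {k | g.eval k ∣ f.eval k}.Infinite) : g ∣ f := by
  obtain ⟨n, q, r, hqr, hr⟩ := exists_C_leadingCoeff_pow_mul_eq_mul_add f hg.ne_zero
  have hr0 : r = 0 := by
    refine eq_zero_of_infinite_eval_dvd_eval_of_degree_lt hr (h.mono fun k hk ↦ ?_)
    have : g.eval k ∣ (C (g.leadingCoeff ^ n) * f).eval k := by
      rw [eval_mul]; exact hk.mul_left _
    rwa [hqr, eval_add, eval_mul, dvd_add_right (dvd_mul_right _ _)] at this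
  refine hg.dvd_of_dvd_C_mul (pow_ne_zero n (leadingCoeff_ne_zero.mpr hg.ne_zero)) ?_
  rw [hqr, hr0, add_zero]
  exact dvd_mul_right g q

end Polynomial

theorem int_primitive_dvd_general (f g : Polynomial ℤ) (hg : g.IsPrimitive)
    (h : ∀ k : ℤ, g.eval k ≠ 0 → g.eval k ∣ f.eval k) : g ∣ f :=
  hg.dvd_of_infinite_eval_dvd_eval <|
    (Set.infinite_univ.sdiff (g.finite_setOfPred_isRoot hg.ne_zero)).mono fun k hk ↦ h k hk.2

theorem int_primitive_dvd (f g : Polynomial ℤ) (hg : g.IsPrimitive) (hdeg : 1 ≤ g.degree)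
    (h : ∀ k : ℤ, g.eval k ≠ 0 → g.eval k ∣ f.eval k) : g ∣ f :=
  int_primitive_dvd_general f g hg h
end

section
/- Let R be an integral domain. Then R is a D-ring if and only if every polynomial f(x) ∈ R[x] such that f(k) is a unit of R for all but finitely many k ∈ R is a constant polynomial. -/
open Polynomial

open Filter

/-! If `R` is a D-ring, taking `f = 1` shows that a polynomial with eventually unit values is a
unit of `K[x]`, hence constant.

Conversely, suppose such polynomials are constant. If `g(k) ∣ d` for almost all `k` and some
constant `d ≠ 0`, write `d = g(a) e`; then `g(a + d x) = g(a) u(x)` with `u ≡ 1 (mod e)`, and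
`u(y) ∣ e` forces `u(y)` to be a unit, so `u`, and with it `g`, is constant. For general
`g(k) ∣ f(k)`, divide `g` and `f` by their gcd in `K[x]` and clear denominators: a Bézout
relation between the coprime cofactors reduces to the previous case, so the cofactor of `g` is a
unit and `g ∣ f` in `K[x]`. -/

theorem exists_isCoprime_of_eq_mul {A : Type*} [EuclideanDomain A] [GCDMonoid A] {p q : A}
    (hq : q ≠ 0) : ∃ d p₁ q₁ : A, p = d * p₁ ∧ q = d * q₁ ∧ IsCoprime p₁ q₁ :=
  ⟨GCDMonoid.gcd p q, p / GCDMonoid.gcd p q, q / GCDMonoid.gcd p q,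
    (EuclideanDomain.mul_div_cancel' (gcd_ne_zero_of_right hq) (gcd_dvd_left p q)).symm,
    (EuclideanDomain.mul_div_cancel' (gcd_ne_zero_of_right hq) (gcd_dvd_right p q)).symm,
    isCoprime_div_gcd_div_gcd hq⟩

namespace Polynomial

variable {R : Type*} [CommRing R]

theorem exists_comp_C_add_C_mul_X_eq (g : R[X]) (a d : R) :
    ∃ w : R[X], g.comp (C a + C d * X) = C (g.eval a) + C d * X * w := by
  obtain ⟨q, hq⟩ := X_dvd_sub_C (p := taylor a g)
  refine ⟨q.comp (C d * X), ?_⟩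
  have htaylor : taylor a g = C (g.eval a) + X * q := by
    rw [← taylor_coeff_zero, ← hq]; ring
  calc g.comp (C a + C d * X) = (taylor a g).comp (C d * X) := by
        rw [taylor_apply, comp_assoc, add_comp, X_comp, C_comp, add_comm]
    _ = _ := by rw [htaylor, add_comp, mul_comp, C_comp, X_comp]

theorem eventually_cofinite_eval_ne_zero [IsDomain R] {p : R[X]} (hp : p ≠ 0) :
    ∀ᶠ k in cofinite, p.eval k ≠ 0 :=
  (finite_setOfPred_isRoot hp).compl_mem_cofinite

theorem eventually_cofinite_eval_dvd_of_mul_eq [IsDomain R] {f g F G H : R[X]} {a b : R}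
    (hH : H ≠ 0) (hG : H * G = C a * g) (hF : H * F = C b * f)
    (hfg : ∀ᶠ k in cofinite, g.eval k ∣ f.eval k) :
    ∀ᶠ k in cofinite, G.eval k ∣ (C a * F).eval k := by
  filter_upwards [hfg, eventually_cofinite_eval_ne_zero hH] with k ⟨t, ht⟩ hk
  have hGk := congrArg (eval k) hG
  have hFk := congrArg (eval k) hF
  simp only [eval_mul, eval_C] at hGk hFk ⊢
  exact ⟨b * t, mul_left_cancel₀ hk <| by
    linear_combination a * hFk - b * t * hGk + a * b * ht⟩

section FractionField

variable {K : Type*} [Field K] [Algebra R K] [IsFractionRing R K]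

theorem isUnit_C_algebraMap {b : R} (hb : b ≠ 0) : IsUnit (C (algebraMap R K b)) :=
  isUnit_C.mpr ((map_ne_zero_iff _ (IsFractionRing.injective R K)).mpr hb).isUnit

variable [IsDomain R]
theorem exists_map_eq_C_mul (p : K[X]) :
    ∃ b : R, b ≠ 0 ∧ ∃ P : R[X], P.map (algebraMap R K) = C (algebraMap R K b) * p := by
  obtain ⟨b, hb, hP⟩ := IsLocalization.integerNormalization_spec (nonZeroDivisors R) p
  exact ⟨b, nonZeroDivisors.ne_zero hb, _, by rw [hP, ← smul_eq_C_mul, algebraMap_smul]⟩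

theorem exists_mul_eq_C_mul_of_map_eq_mul {g H : R[X]} {h g₁ : K[X]} {α : R}
    (hg : g.map (algebraMap R K) = h * g₁)
    (hH : H.map (algebraMap R K) = C (algebraMap R K α) * h) :
    ∃ β : R, β ≠ 0 ∧ ∃ G : R[X],
      G.map (algebraMap R K) = C (algebraMap R K β) * g₁ ∧ H * G = C (α * β) * g := by
  obtain ⟨β, hβ, G, hG⟩ := exists_map_eq_C_mul (R := R) g₁
  refine ⟨β, hβ, G, hG, map_injective _ (IsFractionRing.injective R K) ?_⟩
  rw [Polynomial.map_mul, Polynomial.map_mul, hH, hG, map_C, hg, map_mul, C_mul]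
  ring

theorem exists_mul_add_mul_eq_C_of_isCoprime_map {f g : R[X]}
    (h : IsCoprime (g.map (algebraMap R K)) (f.map (algebraMap R K))) :
    ∃ d : R, d ≠ 0 ∧ ∃ U V : R[X], U * g + V * f = C d := by
  obtain ⟨u, v, huv⟩ := h
  obtain ⟨b, hb, U, hU⟩ := exists_map_eq_C_mul (R := R) u
  obtain ⟨c, hc, V, hV⟩ := exists_map_eq_C_mul (R := R) v
  refine ⟨b * c, mul_ne_zero hb hc, C c * U, C b * V,
    map_injective _ (IsFractionRing.injective R K) ?_⟩
  simp only [Polynomial.map_add, Polynomial.map_mul, map_C, hU, hV, map_mul]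
  linear_combination (C (algebraMap R K b) * C (algebraMap R K c)) * huv

end FractionField

end Polynomial

def UnitValuedPolynomialsConstant (R : Type*) [CommRing R] : Prop :=
  ∀ f : R[X], (∀ᶠ k in cofinite, IsUnit (f.eval k)) → f.degree ≤ 0

namespace UnitValuedPolynomialsConstant

variable {R : Type*} [CommRing R]

theorem infinite [Nontrivial R] (H : UnitValuedPolynomialsConstant R) : Infinite R := by
  by_contra hfin
  have : Finite R := not_infinite_iff_finite.mp hfin
  have hX := H X (by simp [cofinite_eq_bot])
  rw [degree_X] at hX
  exact absurd hX (by decide)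

theorem degree_nonpos_of_eventually_eval_dvd [IsDomain R] (H : UnitValuedPolynomialsConstant R)
    {g : R[X]} {d : R} (hd : d ≠ 0) (hg : ∀ᶠ k in cofinite, g.eval k ∣ d) :
    g.degree ≤ 0 := by
  have := H.infinite
  obtain ⟨a, e, rfl⟩ := hg.exists
  have hga : g.eval a ≠ 0 := left_ne_zero_of_mul hd
  obtain ⟨w, hw⟩ := exists_comp_C_add_C_mul_X_eq g a (g.eval a * e)
  set u : R[X] := 1 + C e * X * w
  have hcomp : g.comp (C a + C (g.eval a * e) * X) = C (g.eval a) * u := by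
    rw [hw, C_mul]; ring
  have hu : ∀ᶠ y in cofinite, IsUnit (u.eval y) := by
    have hinj : Function.Injective fun y : R => a + g.eval a * e * y := fun y z hyz =>
      mul_left_cancel₀ hd (add_left_cancel hyz)
    filter_upwards [hinj.tendsto_cofinite.eventually hg] with y hy
    have hval : g.eval (a + g.eval a * e * y) = g.eval a * u.eval y := by
      simpa using congrArg (eval y) hcomp
    have hdvd : u.eval y ∣ e := (mul_dvd_mul_iff_left hga).mp (hval ▸ hy)
    have hsub : e ∣ u.eval y - 1 := ⟨y * w.eval y, by simp [u]; ring⟩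
    exact isUnit_of_dvd_one (dvd_sub_self_left.mp (hdvd.trans hsub))
  have hnat : u.natDegree = g.natDegree := by
    have hlin : (C a + C (g.eval a * e) * X).natDegree = 1 := by
      rw [add_comm]; exact natDegree_linear hd
    rw [← natDegree_C_mul hga, ← hcomp, natDegree_comp, hlin, mul_one]
  rw [← natDegree_eq_zero_iff_degree_le_zero, ← hnat]
  exact natDegree_eq_zero_iff_degree_le_zero.mpr (H u hu)

section FractionField

variable [IsDomain R] {K : Type*} [Field K] [Algebra R K] [IsFractionRing R K]

theorem degree_nonpos_of_isCoprime_map (H : UnitValuedPolynomialsConstant R) {f g : R[X]}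
    (hcop : IsCoprime (g.map (algebraMap R K)) (f.map (algebraMap R K)))
    (hfg : ∀ᶠ k in cofinite, g.eval k ∣ f.eval k) : g.degree ≤ 0 := by
  obtain ⟨d, hd, U, V, hUV⟩ := exists_mul_add_mul_eq_C_of_isCoprime_map hcop
  refine H.degree_nonpos_of_eventually_eval_dvd hd (hfg.mono fun k hk => ?_)
  have := congrArg (eval k) hUV
  simp only [eval_add, eval_mul, eval_C] at this
  exact this ▸ dvd_add (dvd_mul_left _ _) (hk.mul_left _)

theorem dvd_map_of_eventually_eval_dvd (H : UnitValuedPolynomialsConstant R) {f g : R[X]}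
    (hfg : ∀ᶠ k in cofinite, g.eval k ∣ f.eval k) :
    g.map (algebraMap R K) ∣ f.map (algebraMap R K) := by
  classical
  have := H.infinite
  have hinj := IsFractionRing.injective R K
  rcases eq_or_ne g 0 with rfl | hg
  · obtain rfl : f = 0 := by
      by_contra hf
      obtain ⟨k, hk, hfk⟩ := (hfg.and (eventually_cofinite_eval_ne_zero hf)).exists
      exact hfk (by simpa using hk)
    simp
  obtain ⟨h, f₁, g₁, hf₁, hg₁, hcop⟩ :=
    exists_isCoprime_of_eq_mul (p := f.map (algebraMap R K))
      ((Polynomial.map_ne_zero_iff hinj).mpr hg)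
  obtain ⟨α, hα, P, hP⟩ := exists_map_eq_C_mul (R := R) h
  obtain ⟨β, hβ, G, hG, hPG⟩ := exists_mul_eq_C_mul_of_map_eq_mul hg₁ hP
  obtain ⟨γ, hγ, F, hF, hPF⟩ := exists_mul_eq_C_mul_of_map_eq_mul hf₁ hP
  have hPG0 : P * G ≠ 0 := hPG ▸ mul_ne_zero (C_ne_zero.mpr (mul_ne_zero hα hβ)) hg
  have hcopGF : IsCoprime (G.map (algebraMap R K)) ((C (α * β) * F).map (algebraMap R K)) := by
    rw [hG, Polynomial.map_mul, hF, map_C, ← mul_assoc, isCoprime_mul_unit_left_left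
      (isUnit_C_algebraMap hβ), isCoprime_mul_unit_left_right
      ((isUnit_C_algebraMap (mul_ne_zero hα hβ)).mul (isUnit_C_algebraMap hγ))]
    exact hcop.symm
  have hGdeg := H.degree_nonpos_of_isCoprime_map hcopGF
    (eventually_cofinite_eval_dvd_of_mul_eq (left_ne_zero_of_mul hPG0) hPG hPF hfg)
  have hGunit : IsUnit (G.map (algebraMap R K)) := by
    rw [isUnit_iff_degree_eq_zero, degree_map_eq_of_injective hinj]
    exact le_antisymm hGdeg (zero_le_degree_iff.mpr (right_ne_zero_of_mul hPG0))
  rw [hG] at hGunit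
  rw [hf₁, hg₁]
  exact mul_dvd_mul_left h (isUnit_of_mul_isUnit_right hGunit).dvd

theorem isDRing (H : UnitValuedPolynomialsConstant R) : IsDRing R := fun _ _ hfg =>
  let ⟨q, hq⟩ := H.dvd_map_of_eventually_eval_dvd hfg
  ⟨q, hq.trans (mul_comm _ _)⟩

end FractionField

end UnitValuedPolynomialsConstant

theorem IsDRing.unitValuedPolynomialsConstant {R : Type*} [CommRing R] [IsDomain R]
    (hD : IsDRing R) : UnitValuedPolynomialsConstant R := by
  intro f hf
  obtain ⟨q, hq⟩ := hD 1 f (hf.mono fun k hk => by simpa using hk.dvd)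
  have hunit : IsUnit (f.map (algebraMap R (FractionRing R))) :=
    IsUnit.of_mul_eq_one q (by rw [mul_comm, ← hq, Polynomial.map_one])
  rw [← degree_map_eq_of_injective (IsFractionRing.injective R (FractionRing R)),
    degree_eq_zero_of_isUnit hunit]

theorem isDRing_iff_unit_values (R : Type*) [CommRing R] [IsDomain R] :
    IsDRing R ↔
      ∀ f : Polynomial R,
        (∀ᶠ k in Filter.cofinite, IsUnit (f.eval k)) → f.degree ≤ 0 :=
  ⟨IsDRing.unitValuedPolynomialsConstant, UnitValuedPolynomialsConstant.isDRing⟩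
end
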